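/- arXiv:math/0405448 — 2 statements merged into one kernel-verified Lean document; each statement's English description precedes it below -/
import Mathlib

section
/- Every facet (edge) of a two-dimensional reflexive polytope contains at most five lattice points. -/
open scoped BigOperators

noncomputable section

/-- The standard dot product on `ℝ^d`. -/
def dotProd {d : ℕ} (x y : Fin d → ℝ) : ℝ := ∑ i, x i * y i

/-- A point of `ℝ^d` is a lattice point (element of `ℤ^d`) if all coordinates are integers. -/
def IsLatticePoint {d : ℕ} (x : Fin d → ℝ) : Prop := ∀ i, ∃ n : ℤ, x i = (n : ℝ)

/-- A lattice polytope is the convex hull of finitely many lattice points. -/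
def IsLatticePolytope {d : ℕ} (P : Set (Fin d → ℝ)) : Prop :=
  ∃ V : Finset (Fin d → ℝ), (∀ v ∈ V, IsLatticePoint v) ∧ P = convexHull ℝ (V : Set (Fin d → ℝ))

/-- The dual polytope `P* = {y | ⟨x,y⟩ ≥ -1 ∀ x ∈ P}`. -/
def dualPolytope {d : ℕ} (P : Set (Fin d → ℝ)) : Set (Fin d → ℝ) :=
  {y | ∀ x ∈ P, -1 ≤ dotProd x y}

/-- A reflexive polytope: a full-dimensional lattice polytope with `0` in its interior whose
dual polytope is again a lattice polytope. -/
def IsReflexive {d : ℕ} (P : Set (Fin d → ℝ)) : Prop :=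
  IsLatticePolytope P ∧ (0 : Fin d → ℝ) ∈ interior P ∧ IsLatticePolytope (dualPolytope P)

/-- A face of `P`: the subset of `P` where some linear functional attains its maximum bound. -/
def IsFace {d : ℕ} (P F : Set (Fin d → ℝ)) : Prop :=
  ∃ (u : Fin d → ℝ) (c : ℝ), (∀ x ∈ P, dotProd u x ≤ c) ∧ F = {x ∈ P | dotProd u x = c}

/-- A facet of a `d`-dimensional polytope: a nonempty face of dimension `d - 1`. -/
def IsFacet {d : ℕ} (P F : Set (Fin d → ℝ)) : Prop :=
  IsFace P F ∧ F.Nonempty ∧ Module.finrank ℝ (vectorSpan ℝ F) = d - 1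

/-- `x ∼ y` : `x` and `y` lie in a common facet of `P`. -/
def SameFacet {d : ℕ} (P : Set (Fin d → ℝ)) (x y : Fin d → ℝ) : Prop :=
  ∃ F, IsFacet P F ∧ x ∈ F ∧ y ∈ F

/-- The star set of `x`: the union of all facets of `P` containing `x`. -/
def starSet {d : ℕ} (P : Set (Fin d → ℝ)) (x : Fin d → ℝ) : Set (Fin d → ℝ) :=
  {y | SameFacet P x y}

/-- A family of lattice points forming a `ℤ`-basis of the lattice `ℤ^d`. -/
def IsZBasisFamily {d n : ℕ} (s : Fin n → (Fin d → ℝ)) : Prop :=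
  LinearIndependent ℝ s ∧ (∀ i, IsLatticePoint (s i)) ∧
    ∀ z : Fin d → ℝ, IsLatticePoint z → ∃ c : Fin n → ℤ, z = ∑ i, (c i : ℝ) • s i

/-- A primitive lattice point: a nonzero lattice point such that no lattice point lies
strictly between `0` and it. -/
def IsPrimitivePoint {d : ℕ} (x : Fin d → ℝ) : Prop :=
  IsLatticePoint x ∧ x ≠ 0 ∧ ∀ y ∈ openSegment ℝ (0 : Fin d → ℝ) x, ¬ IsLatticePoint y

/-- A Fano polytope: a full-dimensional lattice polytope with `0` in its interior all of whose
vertices are primitive lattice points. -/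
def IsFanoPolytope {d : ℕ} (P : Set (Fin d → ℝ)) : Prop :=
  IsLatticePolytope P ∧ (0 : Fin d → ℝ) ∈ interior P ∧
    ∀ v ∈ Set.extremePoints ℝ P, IsPrimitivePoint v

/-- Canonical: the only interior lattice point is the origin. -/
def IsCanonicalPolytope {d : ℕ} (P : Set (Fin d → ℝ)) : Prop :=
  {x ∈ interior P | IsLatticePoint x} = {0}

/-- Terminal: the only lattice points of `P` are the origin and the vertices. -/
def IsTerminalPolytope {d : ℕ} (P : Set (Fin d → ℝ)) : Prop :=
  {x ∈ P | IsLatticePoint x} = insert (0 : Fin d → ℝ) (Set.extremePoints ℝ P)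

/-- Simplicial: every facet has exactly `d` vertices. -/
def IsSimplicial {d : ℕ} (P : Set (Fin d → ℝ)) : Prop :=
  ∀ F, IsFacet P F → (Set.extremePoints ℝ F).ncard = d

/-- Smooth: the vertices of every facet form a `ℤ`-basis of the lattice. -/
def IsSmoothPolytope {d : ℕ} (P : Set (Fin d → ℝ)) : Prop :=
  ∀ F, IsFacet P F → ∃ s : Fin d → (Fin d → ℝ),
    Set.extremePoints ℝ F = Set.range s ∧ IsZBasisFamily s

/-- Semi-terminal: any two distinct vertices in a common facet are joined by a lattice-point
free segment. -/
def IsSemiTerminal {d : ℕ} (P : Set (Fin d → ℝ)) : Prop :=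
  ∀ v ∈ Set.extremePoints ℝ P, ∀ w ∈ Set.extremePoints ℝ P, v ≠ w → SameFacet P v w →
    {x ∈ segment ℝ v w | IsLatticePoint x} = {v, w}

/-- The quotient space `ℝ^d / ℝv`. -/
abbrev QuotSpace {d : ℕ} (v : Fin d → ℝ) := (Fin d → ℝ) ⧸ (Submodule.span ℝ {v})

/-- The canonical projection `π_v : ℝ^d → ℝ^d/ℝv`. -/
def projAlong {d : ℕ} (v : Fin d → ℝ) : (Fin d → ℝ) →ₗ[ℝ] QuotSpace v :=
  (Submodule.span ℝ {v}).mkQ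

/-- The quotient lattice `ℤ^d/ℤv`, regarded as the image of `ℤ^d` in `ℝ^d/ℝv`. -/
def quotLattice {d : ℕ} (v : Fin d → ℝ) : Set (QuotSpace v) :=
  projAlong v '' {x | IsLatticePoint x}

/-- A primitive point of the quotient lattice `ℤ^d/ℤv`. -/
def QuotPrimitive {d : ℕ} (v : Fin d → ℝ) (q : QuotSpace v) : Prop :=
  q ∈ quotLattice v ∧ q ≠ 0 ∧ ∀ t ∈ openSegment ℝ (0 : QuotSpace v) q, t ∉ quotLattice v

/-- A Fano polytope in the quotient space `ℝ^d/ℝv` with respect to the lattice `ℤ^d/ℤv`. -/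
def QuotIsFanoPolytope {d : ℕ} (v : Fin d → ℝ) (Q : Set (QuotSpace v)) : Prop :=
  (∃ V : Finset (QuotSpace v), (∀ q ∈ V, q ∈ quotLattice v) ∧
      Q = convexHull ℝ (V : Set (QuotSpace v))) ∧
  (0 : QuotSpace v) ∈ interior Q ∧
  ∀ q ∈ Set.extremePoints ℝ Q, QuotPrimitive v q

/-- Unimodular equivalence: a real linear isomorphism mapping lattice onto lattice and one
polytope onto the other. -/
def LatticeEquivTo {d e : ℕ} (P : Set (Fin d → ℝ)) (Q : Set (Fin e → ℝ)) : Prop :=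
  ∃ f : (Fin d → ℝ) ≃ₗ[ℝ] (Fin e → ℝ),
    (∀ x, IsLatticePoint x ↔ IsLatticePoint (f x)) ∧ f '' P = Q

/-- The hexagon `Z₂ = conv(±(1,0), ±(0,1), ±(1,1)) ⊆ ℝ²`. -/
def Z2 : Set (Fin 2 → ℝ) :=
  convexHull ℝ ({![1,0], ![0,1], ![1,1], ![-1,0], ![0,-1], ![-1,-1]} : Set (Fin 2 → ℝ))

/-- The `j`-th coordinate pair of a point of `ℝ^{2m}`. -/
def pairCoords {m : ℕ} (x : Fin (2 * m) → ℝ) (j : Fin m) : Fin 2 → ℝ :=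
  fun i => x ⟨2 * (j : ℕ) + (i : ℕ), by have := j.isLt; have := i.isLt; omega⟩

/-- The `m`-fold product `Z₂ × ⋯ × Z₂ ⊆ ℝ^{2m}`. -/
def prodZ2 (m : ℕ) : Set (Fin (2 * m) → ℝ) := {x | ∀ j : Fin m, pairCoords x j ∈ Z2}

/-- The `j`-th coordinate pair of a point of `ℝ^{2m+1}` (first `2m` coordinates). -/
def pairCoords' {m : ℕ} (x : Fin (2 * m + 1) → ℝ) (j : Fin m) : Fin 2 → ℝ :=
  fun i => x ⟨2 * (j : ℕ) + (i : ℕ), by have := j.isLt; have := i.isLt; omega⟩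

/-- The product `[-1,1] × Z₂ × ⋯ × Z₂ ⊆ ℝ^{2m+1}` with `m` hexagon factors. -/
def boxProdZ2 (m : ℕ) : Set (Fin (2 * m + 1) → ℝ) :=
  {x | x ⟨2 * m, by omega⟩ ∈ Set.Icc (-1 : ℝ) 1 ∧ ∀ j : Fin m, pairCoords' x j ∈ Z2}


/-!
A facet `F` of a reflexive polygon `P` lies on a line `x ⬝ᵥ y = -1` where `y` is a vertex of the
dual polytope, hence a lattice point. The lattice points of that line are spaced by `ρ`, the
quarter turn of `y`, so six of them on `F` would give a chord of `P` whose endpoints differ by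
`k • ρ` with `k ≥ 5`. Joining this chord to a lattice point `T ∈ P` with `T ⬝ᵥ y = l ≥ 1` and
cutting at the line `x ⬝ᵥ y = 0` through the origin yields a chord of `P` along `ℝ ρ` of length
`l k / (l + 1) ≥ 5 / 2` in units of `ρ`, so `ρ` or `-ρ` lies in the interior of `P`. This is
impossible because reflexive polytopes are canonical.
-/

open Filter Topology

lemma exists_pos_add_smul_mem_of_mem_interior {E : Type*} [AddCommGroup E] [TopologicalSpace E]
    [Module ℝ E] [ContinuousAdd E] [ContinuousSMul ℝ E] {s : Set E} {x : E}
    (hx : x ∈ interior s) (v : E) : ∃ δ : ℝ, 0 < δ ∧ x + δ • v ∈ s := by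
  have hlim : Tendsto (fun t : ℝ => x + t • v) (𝓝[>] 0) (𝓝 x) := by
    have : Continuous fun t : ℝ => x + t • v := by fun_prop
    simpa using (this.tendsto 0).mono_left nhdsWithin_le_nhds
  obtain ⟨δ, hδs, hδ⟩ :=
    ((hlim.eventually (isOpen_interior.mem_nhds hx)).and self_mem_nhdsWithin).exists
  exact ⟨δ, hδ, interior_subset hδs⟩

lemma span_eq_top_of_finrank_vectorSpan {K E : Type*} [Field K] [AddCommGroup E] [Module K E]
    [FiniteDimensional K E] {F : Set E} (f : E →ₗ[K] K) (hf : ∀ x ∈ F, f x = 1)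
    (hne : F.Nonempty) (hrank : Module.finrank K E ≤ Module.finrank K (vectorSpan K F) + 1) :
    Submodule.span K F = ⊤ := by
  obtain ⟨x, hx⟩ := hne
  have hle : vectorSpan K F ≤ Submodule.span K F := by
    rw [vectorSpan_def, Submodule.span_le]
    rintro _ ⟨a, ha, b, hb, rfl⟩
    exact sub_mem (Submodule.subset_span ha) (Submodule.subset_span hb)
  have hker : vectorSpan K F ≤ LinearMap.ker f := by
    rw [vectorSpan_def, Submodule.span_le]
    rintro _ ⟨a, ha, b, hb, rfl⟩
    simp [hf a ha, hf b hb]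
  have hx_not : x ∉ vectorSpan K F := fun h => by simpa [hf x hx] using hker h
  have hlt : vectorSpan K F < Submodule.span K F :=
    lt_of_le_of_ne hle fun h => hx_not (h ▸ Submodule.subset_span hx)
  exact Submodule.eq_top_of_finrank_eq <|
    le_antisymm (Submodule.finrank_le _) (hrank.trans (Submodule.finrank_lt_finrank_of_lt hlt))

lemma Set.InjOn.exists_le_sub_of_lt_ncard {α : Type*} {s : Set α} {f : α → ℤ}
    (hf : Set.InjOn f s) {n : ℕ} (hn : n < s.ncard) : ∃ a ∈ s, ∃ b ∈ s, (n : ℤ) ≤ f b - f a := by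
  have hs : s.Finite := Set.finite_of_ncard_pos (by omega)
  set t := (hs.image f).toFinset
  have ht : n < t.card := by rwa [← Set.ncard_eq_toFinset_card _ (hs.image f), hf.ncard_image]
  have htne : t.Nonempty := Finset.card_pos.mp (by omega)
  have hsub : t ⊆ Finset.Icc (t.min' htne) (t.max' htne) := fun z hz =>
    Finset.mem_Icc.mpr ⟨t.min'_le z hz, t.le_max' z hz⟩
  have hcard := (Finset.card_le_card hsub).trans_lt' ht
  rw [Int.card_Icc] at hcard
  obtain ⟨a, ha, hfa⟩ := (hs.image f).mem_toFinset.mp (t.min'_mem htne)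
  obtain ⟨b, hb, hfb⟩ := (hs.image f).mem_toFinset.mp (t.max'_mem htne)
  exact ⟨a, ha, b, hb, by omega⟩

section

variable {d : ℕ} {P : Set (Fin d → ℝ)}

lemma dotProd_eq_dotProduct (x y : Fin d → ℝ) : dotProd x y = x ⬝ᵥ y := rfl

lemma IsLatticePoint.exists_dotProd_eq_intCast {x y : Fin d → ℝ} (hx : IsLatticePoint x)
    (hy : IsLatticePoint y) : ∃ n : ℤ, dotProd x y = n := by
  choose a ha using hx
  choose b hb using hy
  exact ⟨∑ i, a i * b i, by simp [dotProd, ha, hb]⟩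

lemma eq_zero_of_forall_mem_dotProd_nonpos (h0 : 0 ∈ interior P) {u : Fin d → ℝ}
    (hu : ∀ x ∈ P, dotProd x u ≤ 0) : u = 0 := by
  obtain ⟨δ, hδ, hδu⟩ := exists_pos_add_smul_mem_of_mem_interior h0 u
  have : δ * (u ⬝ᵥ u) ≤ 0 := by simpa [dotProd_eq_dotProduct] using hu _ hδu
  exact dotProduct_self_eq_zero.mp <|
    le_antisymm (nonpos_of_mul_nonpos_right this hδ) (dotProduct_self_star_nonneg u)

lemma IsLatticePolytope.convex (hP : IsLatticePolytope P) : Convex ℝ P := by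
  obtain ⟨V, -, rfl⟩ := hP
  exact convex_convexHull ℝ _

lemma IsLatticePolytope.exists_forall_dotProd_le (hP : IsLatticePolytope P) (x : Fin d → ℝ) :
    ∃ M, 0 < M ∧ ∀ p ∈ P, dotProd p x ≤ M := by
  obtain ⟨V, -, rfl⟩ := hP
  obtain ⟨M, hM⟩ := (V.finite_toSet.isCompact_convexHull ℝ).bddAbove_image
    (f := fun p => dotProd p x) (by unfold dotProd; fun_prop)
  exact ⟨max M 1, by positivity, fun p hp => (hM ⟨p, hp, rfl⟩).trans (le_max_left _ _)⟩

lemma IsLatticePolytope.exists_isLatticePoint_dotProd_pos (hP : IsLatticePolytope P)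
    (h0 : 0 ∈ interior P) {y : Fin d → ℝ} (hy : y ≠ 0) :
    ∃ T ∈ P, IsLatticePoint T ∧ 0 < dotProd T y := by
  obtain ⟨V, hV, rfl⟩ := hP
  by_contra! h
  refine hy (eq_zero_of_forall_mem_dotProd_nonpos h0 fun x hx => ?_)
  have hsub : convexHull ℝ (V : Set (Fin d → ℝ)) ⊆ {z | dotProd z y ≤ 0} :=
    convexHull_min (fun v hv => h v (subset_convexHull ℝ _ hv) (hV v hv))
      (convex_halfSpace_le ((dotProductBilin ℝ ℝ).flip y).isLinear 0)
  exact hsub hx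

lemma IsReflexive.isCanonicalPolytope (hP : IsReflexive P) : IsCanonicalPolytope P := by
  obtain ⟨hPlat, h0, W, hW, hPW⟩ := hP
  refine Set.eq_singleton_iff_unique_mem.mpr ⟨⟨h0, fun _ => ⟨0, by simp⟩⟩, ?_⟩
  rintro x ⟨hxP, hx⟩
  -- For a vertex `z` of the dual, `x ⬝ᵥ z` is an integer `> -1` because `(1 + δ) • x ∈ P`.
  have hW_nonneg : ∀ z ∈ (W : Set (Fin d → ℝ)), 0 ≤ dotProd x z := by
    intro z hz
    obtain ⟨δ, hδ, hδx⟩ := exists_pos_add_smul_mem_of_mem_interior hxP x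
    have hzP : z ∈ dualPolytope P := hPW ▸ subset_convexHull ℝ _ hz
    obtain ⟨n, hn⟩ := hx.exists_dotProd_eq_intCast (hW z hz)
    have h := hzP _ hδx
    rw [dotProd_eq_dotProduct, add_dotProduct, smul_dotProduct, ← dotProd_eq_dotProduct, hn,
      smul_eq_mul] at h
    rw [hn]
    have : (-1 : ℤ) < n := by
      by_contra! hn1
      have : (n : ℝ) ≤ -1 := by exact_mod_cast hn1
      nlinarith
    exact_mod_cast (show (0 : ℤ) ≤ n by omega)
  have hdual_nonneg : ∀ z ∈ dualPolytope P, 0 ≤ dotProd x z :=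
    hPW ▸ convexHull_min hW_nonneg (convex_halfSpace_ge (dotProductBilin ℝ ℝ x).isLinear 0)
  obtain ⟨M, hM, hPM⟩ := hPlat.exists_forall_dotProd_le x
  have hmem : (-M⁻¹) • x ∈ dualPolytope P := by
    intro p hp
    rw [dotProd_eq_dotProduct, dotProduct_smul, ← dotProd_eq_dotProduct, smul_eq_mul, neg_mul,
      neg_le_neg_iff, inv_mul_le_one₀ hM]
    exact hPM p hp
  have h := hdual_nonneg _ hmem
  rw [dotProd_eq_dotProduct, dotProduct_smul, smul_eq_mul] at h
  exact dotProduct_self_eq_zero.mp <| le_antisymm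
    (nonpos_of_mul_nonneg_right h (by simpa using hM)) (dotProduct_self_star_nonneg x)

lemma IsReflexive.abs_le_one_of_smul_mem (hP : IsReflexive P) {v : Fin d → ℝ}
    (hv : IsLatticePoint v) (hv0 : v ≠ 0) {r : ℝ} (hr : r • v ∈ P) : |r| ≤ 1 := by
  have key : ∀ w : Fin d → ℝ, IsLatticePoint w → w ≠ 0 → ∀ s : ℝ, 1 < s → s • w ∉ P := by
    intro w hw hw0 s hs hsw
    refine hw0 (hP.isCanonicalPolytope.subset ⟨?_, hw⟩)
    have := hP.1.convex.combo_interior_self_mem_interior hP.2.1 hsw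
      (sub_pos.mpr (inv_lt_one_of_one_lt₀ hs)) (inv_nonneg.mpr (by linarith)) (sub_add_cancel 1 _)
    rwa [smul_zero, zero_add, smul_smul, inv_mul_cancel₀ (by positivity), one_smul] at this
  have hneg : IsLatticePoint (-v) := fun i => by
    obtain ⟨n, hn⟩ := hv i
    exact ⟨-n, by simp [hn]⟩
  rw [abs_le]
  constructor
  · by_contra! h
    exact key (-v) hneg (neg_ne_zero.mpr hv0) (-r) (by linarith) (by rwa [neg_smul_neg])
  · by_contra! h
    exact key v hv hv0 r h hr

lemma eq_of_forall_dotProd_eq {F : Set (Fin d → ℝ)} (hF : Submodule.span ℝ F = ⊤)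
    {z z' : Fin d → ℝ} (h : ∀ x ∈ F, dotProd x z = dotProd x z') : z = z' := by
  have hker : Submodule.span ℝ F ≤ LinearMap.ker ((dotProductBilin ℝ ℝ).flip (z - z')) :=
    Submodule.span_le.mpr fun x hx => by
      simp [← dotProd_eq_dotProduct, h x hx]
  rw [hF, top_le_iff, LinearMap.ker_eq_top] at hker
  exact sub_eq_zero.mp (dotProduct_self_eq_zero.mp (LinearMap.congr_fun hker (z - z')))

lemma IsFace.subset {F : Set (Fin d → ℝ)} (hF : IsFace P F) : F ⊆ P := by
  obtain ⟨u, c, -, rfl⟩ := hF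
  exact fun x hx => hx.1

lemma IsFacet.exists_eq_setOf_dotProd_eq_one {F : Set (Fin d → ℝ)} (hd : d ≠ 0)
    (h0 : 0 ∈ interior P) (hF : IsFacet P F) :
    ∃ u, (∀ x ∈ P, dotProd u x ≤ 1) ∧ F = {x ∈ P | dotProd u x = 1} := by
  obtain ⟨⟨u, c, huP, rfl⟩, hne, hrank⟩ := hF
  have hc : 0 < c := by
    refine lt_of_le_of_ne (by simpa [dotProd] using huP 0 (interior_subset h0)) fun hc => ?_
    subst hc
    have hu : u = 0 := eq_zero_of_forall_mem_dotProd_nonpos h0 fun x hx => by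
      simpa [dotProd_eq_dotProduct, dotProduct_comm] using huP x hx
    have hFP : {x ∈ P | dotProd u x = 0} = P := by simp [hu, dotProd]
    have htop : vectorSpan ℝ P = ⊤ := by
      rw [← direction_affineSpan, affineSpan_eq_top_of_nonempty_interior
        ⟨0, interior_mono (subset_convexHull ℝ P) h0⟩, AffineSubspace.direction_top]
    rw [hFP, htop, finrank_top, Module.finrank_fin_fun] at hrank
    omega
  refine ⟨c⁻¹ • u, fun x hx => ?_, ?_⟩
  · rw [dotProd_eq_dotProduct, smul_dotProduct, smul_eq_mul, inv_mul_le_one₀ hc]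
    exact huP x hx
  · ext x
    simp only [Set.mem_ofPred_eq, dotProd_eq_dotProduct, smul_dotProduct, smul_eq_mul,
      inv_mul_eq_one₀ hc.ne']
    exact and_congr_right fun _ => eq_comm

lemma IsReflexive.exists_isLatticePoint_dotProd_eq_neg_one {F : Set (Fin d → ℝ)} (hd : d ≠ 0)
    (hP : IsReflexive P) (hF : IsFacet P F) :
    ∃ y, IsLatticePoint y ∧ ∀ x ∈ F, dotProd x y = -1 := by
  obtain ⟨-, h0, W, hW, hPW⟩ := hP
  obtain ⟨u, huP, rfl⟩ := hF.exists_eq_setOf_dotProd_eq_one hd h0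
  have hFu : ∀ x ∈ {x ∈ P | dotProd u x = 1}, dotProd x (-u) = -1 := fun x hx => by
    rw [← hx.2]; simp [dotProd_eq_dotProduct, dotProduct_comm]
  have huD : -u ∈ dualPolytope P := fun x hx => by
    simpa [dotProd_eq_dotProduct, dotProduct_comm] using huP x hx
  have hspan : Submodule.span ℝ {x ∈ P | dotProd u x = 1} = ⊤ :=
    span_eq_top_of_finrank_vectorSpan (dotProductBilin ℝ ℝ u) (fun x hx => hx.2) hF.2.1
      (by rw [Module.finrank_fin_fun, hF.2.2]; omega)
  -- `-u` is the only point `z` with `x ⬝ᵥ z = -1` on the facet, so it is a vertex of the dual.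
  have hext : -u ∈ Set.extremePoints ℝ (dualPolytope P) := by
    refine ⟨huD, fun z hz z' hz' hseg => eq_of_forall_dotProd_eq hspan fun x hx => ?_⟩
    obtain ⟨a, b, ha, hb, hab, hzz'⟩ := hseg
    have h3 : a * dotProd x z + b * dotProd x z' = -1 := by
      rw [← hFu x hx, ← hzz']
      simp [dotProd_eq_dotProduct, dotProduct_add, dotProduct_smul]
    have := hz x hx.1
    have := hz' x hx.1
    rw [hFu x hx]
    nlinarith
  exact ⟨-u, hW _ (extremePoints_convexHull_subset (hPW ▸ hext)), hFu⟩

end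

def quarterTurn (y : Fin 2 → ℝ) : Fin 2 → ℝ := ![-y 1, y 0]

lemma IsLatticePoint.quarterTurn {y : Fin 2 → ℝ} (hy : IsLatticePoint y) :
    IsLatticePoint (quarterTurn y) := by
  obtain ⟨m, hm⟩ := hy 0
  obtain ⟨n, hn⟩ := hy 1
  intro i
  fin_cases i
  · exact ⟨-n, by simp [_root_.quarterTurn, hn]⟩
  · exact ⟨m, by simp [_root_.quarterTurn, hm]⟩

lemma quarterTurn_ne_zero {y : Fin 2 → ℝ} (hy : y ≠ 0) : quarterTurn y ≠ 0 := by
  contrapose! hy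
  have h0 := congrFun hy 0
  have h1 := congrFun hy 1
  simp only [quarterTurn, Matrix.cons_val_zero, Matrix.cons_val_one, Pi.zero_apply,
    neg_eq_zero] at h0 h1
  ext i; fin_cases i <;> simp [h0, h1]

-- The coefficient comes from `-x` being a Bézout vector for `y`: `(-x) ⬝ᵥ y = 1`.
lemma eq_smul_quarterTurn_of_dotProd_eq_zero {x y q : Fin 2 → ℝ} (hx : dotProd x y = -1)
    (hq : dotProd q y = 0) : q = (q 0 * x 1 - q 1 * x 0) • quarterTurn y := by
  simp only [dotProd, Fin.sum_univ_two] at hx hq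
  ext i
  fin_cases i
  · simp [quarterTurn]; linear_combination q 0 * hx - x 0 * hq
  · simp [quarterTurn]; linear_combination q 1 * hx - x 1 * hq

lemma exists_int_eq_add_smul_quarterTurn {x₀ x y : Fin 2 → ℝ} (hx₀ : IsLatticePoint x₀)
    (hx : IsLatticePoint x) (hx₀y : dotProd x₀ y = -1) (hxy : dotProd x y = -1) :
    ∃ n : ℤ, x = x₀ + (n : ℝ) • quarterTurn y := by
  obtain ⟨a, ha⟩ := hx₀ 0
  obtain ⟨b, hb⟩ := hx₀ 1
  obtain ⟨c, hc⟩ := hx 0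
  obtain ⟨e, he⟩ := hx 1
  have hdiff : dotProd (x - x₀) y = 0 := by
    simp only [dotProd_eq_dotProduct, sub_dotProduct] at hx₀y hxy ⊢
    linarith
  refine ⟨c * b - e * a, ?_⟩
  rw [← sub_eq_iff_eq_add', eq_smul_quarterTurn_of_dotProd_eq_zero hx₀y hdiff]
  simp only [Pi.sub_apply, ha, hb, hc, he]
  push_cast
  ring_nf

lemma IsReflexive.le_four_of_add_smul_quarterTurn_mem {P : Set (Fin 2 → ℝ)}
    (hP : IsReflexive P) {x y : Fin 2 → ℝ} (hy : IsLatticePoint y) (hx : x ∈ P)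
    (hxy : dotProd x y = -1) {t : ℝ} (ht : x + t • quarterTurn y ∈ P) : t ≤ 4 := by
  have hy0 : y ≠ 0 := by
    rintro rfl
    simp [dotProd] at hxy
  obtain ⟨T, hTP, hT, hTy⟩ := hP.1.exists_isLatticePoint_dotProd_pos hP.2.1 hy0
  obtain ⟨l, hl⟩ := hT.exists_dotProd_eq_intCast hy
  have hl1 : (1 : ℝ) ≤ l := by
    rw [hl] at hTy
    exact_mod_cast (show (0 : ℤ) < l by exact_mod_cast hTy)
  set a : ℝ := l / (l + 1)
  set b : ℝ := 1 / (l + 1)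
  have ha : 1 / 2 ≤ a := by rw [div_le_div_iff₀ two_pos (by positivity)]; linarith
  have hb : 0 ≤ b := by positivity
  have hab : a + b = 1 := by rw [← add_div, div_self (by linarith)]
  set ρ := quarterTurn y
  have hρ := hy.quarterTurn
  have hρ0 := quarterTurn_ne_zero hy0
  have hQy : dotProd (a • x + b • T) y = 0 := by
    simp only [dotProd_eq_dotProduct, add_dotProduct, smul_dotProduct, smul_eq_mul] at hxy hl ⊢
    rw [hxy, hl]
    field_simp [a, b]
    ring
  set s := (a • x + b • T) 0 * x 1 - (a • x + b • T) 1 * x 0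
  have hQ : a • x + b • T = s • ρ := eq_smul_quarterTurn_of_dotProd_eq_zero hxy hQy
  have hs := hP.abs_le_one_of_smul_mem hρ hρ0 (hQ ▸ hP.1.convex hx hTP (by linarith) hb hab)
  have hst : |s + a * t| ≤ 1 := by
    refine hP.abs_le_one_of_smul_mem hρ hρ0 ?_
    convert hP.1.convex ht hTP (by linarith) hb hab using 1
    rw [smul_add, add_right_comm, hQ, smul_smul, ← add_smul]
  rw [abs_le] at hs hst
  nlinarith

/-- Every facet of a two-dimensional reflexive polytope contains at most five
lattice points. -/
theorem two_dim_reflexive_facet_lattice_points_le_five (P : Set (Fin 2 → ℝ))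
    (hP : IsReflexive P) (F : Set (Fin 2 → ℝ)) (hF : IsFacet P F) :
    {x ∈ F | IsLatticePoint x}.ncard ≤ 5 := by
  by_contra! h
  obtain ⟨y, hy, hFy⟩ := hP.exists_isLatticePoint_dotProd_eq_neg_one two_ne_zero hF
  have hFP := hF.1.subset
  obtain ⟨x₀, hx₀F, hx₀⟩ := Set.nonempty_of_ncard_ne_zero (s := {x ∈ F | IsLatticePoint x})
    (by omega)
  have hcoord : ∀ x ∈ {x ∈ F | IsLatticePoint x}, ∃ n : ℤ, x = x₀ + (n : ℝ) • quarterTurn y :=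
    fun x hx => exists_int_eq_add_smul_quarterTurn hx₀ hx.2 (hFy x₀ hx₀F) (hFy x hx.1)
  choose! n hn using hcoord
  have hinj : Set.InjOn n {x ∈ F | IsLatticePoint x} := fun a ha b hb hab => by
    rw [hn a ha, hn b hb, hab]
  obtain ⟨a, ha, b, hb, hab⟩ := hinj.exists_le_sub_of_lt_ncard h
  have hba : b = a + ((n b - n a : ℤ) : ℝ) • quarterTurn y := by
    push_cast
    linear_combination (norm := module) hn b hb - hn a ha
  have h4 := hP.le_four_of_add_smul_quarterTurn_mem hy (hFP ha.1) (hFy a ha.1) (hba ▸ hFP hb.1)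
  have : n b - n a ≤ 4 := by exact_mod_cast h4
  omega

end
end

section
/- Let d ≥ 2, let P ⊆ ℝ^d be a canonical Fano polytope, and let B be a subset of the boundary lattice points of P such that for all distinct x, y ∈ B lying in a common facet of P, the segment [x, y] contains exactly the two lattice points x and y. Let s denote the number of centrally symmetric pairs {x, −x} contained in B. Then |B| ≤ 2^{d+1} − 2 and s ≥ |B| + 1 − 2^d. -/
open scoped BigOperators

noncomputable section

/-!
Two distinct points `x ≠ y` of `B` in the same class modulo `2ℤ^d` have a lattice midpoint. If
the midpoint is interior it is `0` by canonicity, so `y = -x`. Otherwise it lies in a facet;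
since a facet is cut out by a supporting hyperplane, `x` and `y` lie in that facet too, and the
midpoint contradicts the segment hypothesis. No point of `B` is `≡ 0`, since `x / 2` would be a
nonzero interior lattice point. Hence each of the `2^d - 1` nonzero classes meets `B` in at most
one point or in a pair `{x, -x}`, which gives both bounds.

The geometric input is that every boundary point `m` of `P` lies in a facet: for an extreme point
`u` of the face of the polar polytope dual to `m`, the vertices `v` with `u ⬝ᵥ v = 1` together
with `m` span `ℝ^d`.
-/

open scoped Matrix
open Set Filter Topology Module

section

variable {d : ℕ}

lemma exists_dotProduct_eq (f : Dual ℝ (Fin d → ℝ)) : ∃ u : Fin d → ℝ, ∀ x, f x = u ⬝ᵥ x :=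
  ⟨_, fun x => (LinearMap.congr_fun ((dotProductEquiv ℝ (Fin d)).apply_symm_apply f) x).symm⟩

theorem exists_dotProduct_le_one_of_mem_frontier {P : Set (Fin d → ℝ)} (hP : Convex ℝ P)
    (h0 : (0 : Fin d → ℝ) ∈ interior P) {m : Fin d → ℝ} (hm : m ∈ frontier P) :
    ∃ u : Fin d → ℝ, (∀ p ∈ P, u ⬝ᵥ p ≤ 1) ∧ u ⬝ᵥ m = 1 := by
  obtain ⟨f, hf⟩ := geometric_hahn_banach_open_point hP.interior isOpen_interior hm.2
  have hfm : 0 < f m := by simpa using hf 0 h0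
  have hle : closure (interior P) ⊆ {p | f p ≤ f m} :=
    closure_minimal (fun p hp => (hf p hp).le) (isClosed_le f.continuous continuous_const)
  rw [hP.closure_interior_eq_closure_of_nonempty_interior ⟨0, h0⟩] at hle
  obtain ⟨g, hg⟩ := exists_dotProduct_eq (f : Dual ℝ (Fin d → ℝ))
  refine ⟨(f m)⁻¹ • g, fun p hp => ?_, ?_⟩
  · rw [smul_dotProduct, ← hg, smul_eq_mul, inv_mul_le_one₀ hfm]
    exact hle (subset_closure hp)
  · rw [smul_dotProduct, ← hg, smul_eq_mul]
    exact inv_mul_cancel₀ hfm.ne'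

lemma dotProduct_le_one_of_mem_convexHull {V : Set (Fin d → ℝ)} {u p : Fin d → ℝ}
    (hu : ∀ v ∈ V, u ⬝ᵥ v ≤ 1) (hp : p ∈ convexHull ℝ V) : u ⬝ᵥ p ≤ 1 :=
  convexHull_min hu (convex_halfSpace_le (dotProductEquiv ℝ (Fin d) u).isLinear 1) hp

lemma norm_le_of_dotProduct_le_one {r : ℝ} (hr : 0 < r) {u : Fin d → ℝ}
    (hu : ∀ p ∈ Metric.ball 0 r, u ⬝ᵥ p ≤ 1) : ‖u‖ ≤ 2 / r := by
  refine pi_norm_le_iff_of_nonneg (by positivity) |>.2 fun i => ?_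
  have key : ∀ c : ℝ, |c| < r → c * u i ≤ 1 := fun c hc => by
    have hmem : c • (Pi.single i 1 : Fin d → ℝ) ∈ Metric.ball 0 r := by
      simpa [norm_smul, Pi.norm_single] using hc
    simpa [dotProduct_smul, dotProduct_single, mul_comm] using hu _ hmem
  have h₁ := key (r / 2) (by rw [abs_of_pos (by positivity)]; linarith)
  have h₂ := key (-(r / 2)) (by rw [abs_neg, abs_of_pos (by positivity)]; linarith)
  rw [Real.norm_eq_abs, abs_le, le_div_iff₀ hr, ← neg_div, div_le_iff₀ hr]
  constructor <;> nlinarith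

/-- The normals `u` of the supporting hyperplanes `{p | u ⬝ᵥ p = 1}` of `convexHull ℝ V` through
`m`: the face of the polar polytope dual to `m`. -/
def supportNormals (V : Set (Fin d → ℝ)) (m : Fin d → ℝ) : Set (Fin d → ℝ) :=
  {u | (∀ v ∈ V, u ⬝ᵥ v ≤ 1) ∧ u ⬝ᵥ m = 1}

lemma isCompact_supportNormals {V : Set (Fin d → ℝ)} {r : ℝ} (hr : 0 < r)
    (hV : Metric.ball 0 r ⊆ convexHull ℝ V) (m : Fin d → ℝ) :
    IsCompact (supportNormals V m) := by
  refine Metric.isCompact_of_isClosed_isBounded ?_ ?_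
  · simp only [supportNormals, ofPred_and, ofPred_forall]
    exact (isClosed_biInter fun v _ => isClosed_le (by fun_prop) continuous_const).inter
      (isClosed_eq (by fun_prop) continuous_const)
  · refine (Metric.isBounded_closedBall (x := 0) (r := 2 / r)).subset fun u hu => ?_
    rw [Metric.mem_closedBall, dist_zero_right]
    exact norm_le_of_dotProduct_le_one hr fun p hp =>
      dotProduct_le_one_of_mem_convexHull hu.1 (hV hp)

/-- Otherwise `u` could be moved both ways, orthogonally to these points, without leaving
`supportNormals V m`. -/
lemma span_insert_eq_top_of_mem_extremePoints {V : Finset (Fin d → ℝ)} {m u : Fin d → ℝ}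
    (hu : u ∈ (supportNormals V m).extremePoints ℝ) :
    Submodule.span ℝ (insert m {v | v ∈ V ∧ u ⬝ᵥ v = 1}) = ⊤ := by
  by_contra hS
  obtain ⟨f, hf0, hSf⟩ := Submodule.exists_le_ker_of_lt_top _ (lt_top_iff_ne_top.2 hS)
  obtain ⟨w, hw⟩ := exists_dotProduct_eq f
  have hw0 : w ≠ 0 := by
    rintro rfl
    exact hf0 (LinearMap.ext fun x => by simp [hw])
  have hwS : ∀ x ∈ insert m {v | v ∈ V ∧ u ⬝ᵥ v = 1}, w ⬝ᵥ x = 0 := fun x hx =>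
    (hw x).symm.trans (hSf (Submodule.subset_span hx))
  have hnear : ∀ᶠ σ in 𝓝 (0 : ℝ), u + σ • w ∈ supportNormals V m := by
    have hdot : ∀ (σ : ℝ) x, (u + σ • w) ⬝ᵥ x = u ⬝ᵥ x + σ * (w ⬝ᵥ x) := fun σ x => by
      rw [add_dotProduct, smul_dotProduct, smul_eq_mul]
    refine ((eventually_all_finset V).2 fun v hv => ?_).mono fun σ hσ => ⟨hσ, ?_⟩
    · rcases (hu.1.1 v hv).eq_or_lt with h | h
      · refine .of_forall fun σ => ?_
        rw [hdot, h, hwS v (mem_insert_of_mem _ ⟨hv, h⟩), mul_zero, add_zero]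
      · have hc : Continuous fun σ : ℝ => u ⬝ᵥ v + σ * (w ⬝ᵥ v) := by fun_prop
        filter_upwards [hc.continuousAt.eventually_lt continuousAt_const (by simpa using h)]
          with σ hσ
        exact (hdot σ v).trans_le hσ.le
    · rw [hdot, hu.1.2, hwS m (mem_insert _ _), mul_zero, add_zero]
  obtain ⟨δ, hδ, hδu⟩ := Metric.eventually_nhds_iff.1 hnear
  have hδ2 : |δ / 2| < δ := by rw [abs_of_pos (by positivity)]; linarith
  have h₁ := hδu (y := δ / 2) (by rwa [Real.dist_0_eq_abs])
  have h₂ := hδu (y := -(δ / 2)) (by rwa [Real.dist_0_eq_abs, abs_neg])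
  have hmid : u ∈ openSegment ℝ (u + (δ / 2) • w) (u + (-(δ / 2)) • w) :=
    ⟨1 / 2, 1 / 2, by norm_num, by norm_num, by norm_num, by module⟩
  have hu_eq := ((mem_extremePoints.1 hu).2 _ h₁ _ h₂ hmid).1
  exact hw0 ((smul_eq_zero.1 (add_eq_left.1 hu_eq)).resolve_left (by positivity))

lemma finrank_span_le_finrank_vectorSpan_add_one {k E : Type*} [DivisionRing k] [AddCommGroup E]
    [Module k E] [FiniteDimensional k E] {s : Set E} {p : E} (hp : p ∈ s) :
    finrank k (Submodule.span k s) ≤ finrank k (vectorSpan k s) + 1 := by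
  have hle : Submodule.span k s ≤ (k ∙ p) ⊔ vectorSpan k s := by
    refine Submodule.span_le.2 fun v hv => ?_
    rw [← add_sub_cancel p v]
    exact Submodule.add_mem_sup (Submodule.mem_span_singleton_self p)
      (vsub_mem_vectorSpan k hv hp)
  have hp1 : finrank k (k ∙ p) ≤ 1 := (finrank_span_le_card ({p} : Set E)).trans (by simp)
  have := Submodule.finrank_add_le_finrank_add_finrank (k ∙ p) (vectorSpan k s)
  have := Submodule.finrank_mono hle
  omega

lemma finrank_vectorSpan_lt_of_dotProduct_eq {F : Set (Fin d → ℝ)} {u : Fin d → ℝ} {c : ℝ}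
    (hu : u ≠ 0) (hF : ∀ p ∈ F, u ⬝ᵥ p = c) : finrank ℝ (vectorSpan ℝ F) < d := by
  have hle : vectorSpan ℝ F ≤ LinearMap.ker (dotProductEquiv ℝ (Fin d) u) := by
    rw [vectorSpan_def, Submodule.span_le]
    rintro _ ⟨p, hp, q, hq, rfl⟩
    simp [dotProduct_sub, hF p hp, hF q hq]
  have hne : LinearMap.ker (dotProductEquiv ℝ (Fin d) u) ≠ ⊤ := by
    rwa [Ne, LinearMap.ker_eq_top, LinearEquiv.map_eq_zero_iff]
  calc finrank ℝ (vectorSpan ℝ F) ≤ _ := Submodule.finrank_mono hle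
    _ < finrank ℝ (Fin d → ℝ) := Submodule.finrank_lt hne
    _ = d := finrank_fin_fun ℝ

theorem exists_isFacet_of_mem_frontier {V : Finset (Fin d → ℝ)} {P : Set (Fin d → ℝ)}
    (hP : P = convexHull ℝ ↑V) (h0 : (0 : Fin d → ℝ) ∈ interior P) {m : Fin d → ℝ}
    (hm : m ∈ frontier P) :
    ∃ u : Fin d → ℝ, (∀ p ∈ P, u ⬝ᵥ p ≤ 1) ∧ u ⬝ᵥ m = 1 ∧ IsFacet P {p ∈ P | u ⬝ᵥ p = 1} := by
  subst hP
  obtain ⟨r, hr, hball⟩ := Metric.mem_nhds_iff.1 (mem_interior_iff_mem_nhds.1 h0)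
  obtain ⟨u₀, hu₀P, hu₀m⟩ :=
    exists_dotProduct_le_one_of_mem_frontier (convex_convexHull ℝ _) h0 hm
  obtain ⟨u, hu⟩ := (isCompact_supportNormals hr hball m).extremePoints_nonempty
    ⟨u₀, fun v hv => hu₀P v (subset_convexHull ℝ _ hv), hu₀m⟩
  have hmP : m ∈ convexHull ℝ (V : Set (Fin d → ℝ)) :=
    (V.finite_toSet.isCompact_convexHull (𝕜 := ℝ)).isClosed.frontier_subset hm
  have hule : ∀ p ∈ convexHull ℝ (V : Set (Fin d → ℝ)), u ⬝ᵥ p ≤ 1 := fun p =>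
    dotProduct_le_one_of_mem_convexHull hu.1.1
  have hum : u ⬝ᵥ m = 1 := hu.1.2
  refine ⟨u, hule, hum, ⟨u, 1, hule, rfl⟩, ⟨m, hmP, hum⟩, le_antisymm ?_ ?_⟩
  · have hu0 : u ≠ 0 := by rintro rfl; simp at hum
    have := finrank_vectorSpan_lt_of_dotProduct_eq hu0
      (F := {p ∈ convexHull ℝ (V : Set (Fin d → ℝ)) | u ⬝ᵥ p = 1}) fun p hp => hp.2
    omega
  · have hsub : insert m {v | v ∈ V ∧ u ⬝ᵥ v = 1} ⊆
        {p ∈ convexHull ℝ (V : Set (Fin d → ℝ)) | u ⬝ᵥ p = 1} :=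
      insert_subset ⟨hmP, hum⟩ fun v hv => ⟨subset_convexHull ℝ _ hv.1, hv.2⟩
    have := finrank_span_le_finrank_vectorSpan_add_one (k := ℝ)
      (mem_insert m {v | v ∈ V ∧ u ⬝ᵥ v = 1})
    rw [span_insert_eq_top_of_mem_extremePoints hu, finrank_top, finrank_fin_fun] at this
    have := Submodule.finrank_mono (vectorSpan_mono ℝ hsub)
    omega

theorem sameFacet_of_midpoint_mem_frontier {V : Finset (Fin d → ℝ)} {P : Set (Fin d → ℝ)}
    (hP : P = convexHull ℝ ↑V) (h0 : (0 : Fin d → ℝ) ∈ interior P) {x y : Fin d → ℝ}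
    (hx : x ∈ P) (hy : y ∈ P) (hxy : midpoint ℝ x y ∈ frontier P) : SameFacet P x y := by
  obtain ⟨u, hle, hmid, hF⟩ := exists_isFacet_of_mem_frontier hP h0 hxy
  rw [midpoint_eq_smul_add, dotProduct_smul, dotProduct_add, smul_eq_mul, invOf_eq_inv] at hmid
  have hux := hle x hx
  have huy := hle y hy
  exact ⟨_, hF, ⟨hx, by linarith⟩, ⟨hy, by linarith⟩⟩

/-- The class of a point modulo `2ℤ^d`; the floor only serves to read off the integer
coordinates of a lattice point. -/
def mod2 (x : Fin d → ℝ) : Fin d → ZMod 2 := fun i => ⌊x i⌋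

lemma isLatticePoint_midpoint {x y : Fin d → ℝ} (hx : IsLatticePoint x) (hy : IsLatticePoint y)
    (h : mod2 x = mod2 y) : IsLatticePoint (midpoint ℝ x y) := by
  intro i
  obtain ⟨a, ha⟩ := hx i
  obtain ⟨b, hb⟩ := hy i
  have hab : (a : ZMod 2) = b := by simpa [mod2, ha, hb] using congrFun h i
  obtain ⟨k, hk⟩ := (ZMod.intCast_eq_intCast_iff_dvd_sub a b 2).1 hab
  refine ⟨a + k, ?_⟩
  have hk' : (b : ℝ) - a = 2 * k := by exact_mod_cast hk
  rw [midpoint_eq_smul_add]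
  simp only [Pi.smul_apply, Pi.add_apply, ha, hb, invOf_eq_inv, smul_eq_mul]
  push_cast
  linarith

lemma IsCanonicalPolytope.eq_zero {P : Set (Fin d → ℝ)} (hP : IsCanonicalPolytope P)
    {x : Fin d → ℝ} (hx : x ∈ interior P) (hl : IsLatticePoint x) : x = 0 :=
  hP.subset ⟨hx, hl⟩

lemma mod2_ne_zero {P : Set (Fin d → ℝ)} (hP : Convex ℝ P) (h0 : (0 : Fin d → ℝ) ∈ interior P)
    (hcan : IsCanonicalPolytope P) {x : Fin d → ℝ} (hx : x ∈ frontier P)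
    (hl : IsLatticePoint x) : mod2 x ≠ 0 := by
  intro h
  have hmid : midpoint ℝ 0 x ∈ interior P :=
    hP.openSegment_interior_closure_subset_interior h0 hx.1 (midpoint_mem_openSegment 0 x)
  have hlat : IsLatticePoint (midpoint ℝ 0 x) :=
    isLatticePoint_midpoint (fun _ => ⟨0, by simp⟩) hl (by rw [h]; funext; simp [mod2])
  have hx0 := (midpoint_eq_left_iff ℝ).1 (IsCanonicalPolytope.eq_zero hcan hmid hlat)
  exact hx.2 (hx0 ▸ h0)

theorem eq_neg_of_mod2_eq {V : Finset (Fin d → ℝ)} {P : Set (Fin d → ℝ)}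
    (hP : P = convexHull ℝ ↑V) (h0 : (0 : Fin d → ℝ) ∈ interior P) (hcan : IsCanonicalPolytope P)
    {x y : Fin d → ℝ} (hx : x ∈ P) (hy : y ∈ P) (hxl : IsLatticePoint x) (hyl : IsLatticePoint y)
    (hxy : x ≠ y) (h : mod2 x = mod2 y)
    (hseg : SameFacet P x y → {z ∈ segment ℝ x y | IsLatticePoint z} = {x, y}) : y = -x := by
  have hmid := isLatticePoint_midpoint hxl hyl h
  by_cases hint : midpoint ℝ x y ∈ interior P
  · have := midpoint_eq_iff.1 (IsCanonicalPolytope.eq_zero hcan hint hmid)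
    simpa [Equiv.pointReflection_apply] using this.symm
  · have hmP : midpoint ℝ x y ∈ P :=
      (hP ▸ convex_convexHull ℝ _ : Convex ℝ P).segment_subset hx hy (midpoint_mem_segment x y)
    have hmem : midpoint ℝ x y ∈ ({x, y} : Set (Fin d → ℝ)) :=
      hseg (sameFacet_of_midpoint_mem_frontier hP h0 hx hy ⟨subset_closure hmP, hint⟩) ▸
        ⟨midpoint_mem_segment x y, hmid⟩
    rcases hmem with h | h
    · exact absurd ((midpoint_eq_left_iff ℝ).1 h) hxy
    · exact absurd ((midpoint_eq_right_iff ℝ).1 h) hxy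

lemma isLatticePoint_iff_mem_span {x : Fin d → ℝ} :
    IsLatticePoint x ↔ x ∈ Submodule.span ℤ (range (Pi.basisFun ℝ (Fin d))) := by
  rw [Basis.mem_span_iff_repr_mem]
  simp [IsLatticePoint, eq_comm]

lemma Bornology.IsBounded.finite_isLatticePoint {s : Set (Fin d → ℝ)}
    (hs : Bornology.IsBounded s) : {x ∈ s | IsLatticePoint x}.Finite :=
  (ZSpan.setFinite_inter (Pi.basisFun ℝ (Fin d)) hs).subset fun _ hx =>
    ⟨hx.1, isLatticePoint_iff_mem_span.1 hx.2⟩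

end

section Counting

open scoped Finset

variable {α β : Type*} [Neg α] {f : α → β}

lemma Finset.filter_eq_subset_pair [DecidableEq α] [DecidableEq β] {B : Finset α}
    (hf : ∀ x ∈ B, ∀ y ∈ B, x ≠ y → f x = f y → y = -x) {x : α} (hx : x ∈ B) :
    {y ∈ B | f y = f x} ⊆ {x, -x} := fun y hy => by
  rw [Finset.mem_filter] at hy
  rcases eq_or_ne y x with rfl | hyx
  · exact Finset.mem_insert_self _ _
  · rw [hf x hx y hy.1 hyx.symm hy.2.symm]
    exact Finset.mem_insert_of_mem (Finset.mem_singleton_self _)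

theorem Set.ncard_le_two_mul_ncard_image {B : Set α} (hB : B.Finite)
    (hf : ∀ x ∈ B, ∀ y ∈ B, x ≠ y → f x = f y → y = -x) : B.ncard ≤ 2 * (f '' B).ncard := by
  classical
  obtain ⟨B, rfl⟩ := hB.exists_finset_coe
  rw [Set.ncard_coe_finset, ← Finset.coe_image, Set.ncard_coe_finset]
  refine Finset.card_le_mul_card_image B 2 fun t ht => ?_
  obtain ⟨x, hx, rfl⟩ := Finset.mem_image.1 ht
  exact (Finset.card_le_card (Finset.filter_eq_subset_pair hf hx)).trans Finset.card_le_two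

theorem Set.ncard_le_ncard_image_add_ncard_pairs {B : Set α} (hB : B.Finite)
    (hf : ∀ x ∈ B, ∀ y ∈ B, x ≠ y → f x = f y → y = -x) :
    B.ncard ≤ (f '' B).ncard + {q : Set α | ∃ x, x ∈ B ∧ -x ∈ B ∧ q = {x, -x}}.ncard := by
  classical
  obtain ⟨B, rfl⟩ := hB.exists_finset_coe
  set S := {q : Set α | ∃ x, x ∈ (B : Set α) ∧ -x ∈ (B : Set α) ∧ q = {x, -x}}
  set fiber : β → Set α := fun t => ↑{x ∈ B | f x = t}
  have hfiber : ∀ t ∈ B.image f, #{x ∈ B | f x = t} ≤ 1 + if fiber t ∈ S then 1 else 0 := by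
    intro t ht
    obtain ⟨x, hx, rfl⟩ := Finset.mem_image.1 ht
    have hsub := Finset.filter_eq_subset_pair hf hx
    split_ifs with hS
    · exact (Finset.card_le_card hsub).trans Finset.card_le_two
    · by_contra! h2
      have heq := Finset.eq_of_subset_of_card_le hsub (Finset.card_le_two.trans h2)
      have hneg : -x ∈ B := (Finset.mem_filter.1 (heq.symm.subset (by simp))).1
      exact hS ⟨x, hx, hneg, by simp only [fiber, heq, Finset.coe_insert, Finset.coe_singleton]⟩
  have hinj : Set.InjOn fiber ↑(B.image f) := by
    intro t ht t' _ htt'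
    obtain ⟨x, hx, rfl⟩ := Finset.mem_image.1 ht
    have : x ∈ fiber t' := htt' ▸ Finset.mem_coe.2 (Finset.mem_filter.2 ⟨hx, rfl⟩)
    exact (Finset.mem_filter.1 this).2
  have hSfin : S.Finite := ((B.finite_toSet).image fun x => ({x, -x} : Set α)).subset
    fun q ⟨x, hx, _, hq⟩ => ⟨x, hx, hq.symm⟩
  rw [Set.ncard_coe_finset]
  calc #B = ∑ t ∈ B.image f, #{x ∈ B | f x = t} := Finset.card_eq_sum_card_image f B
    _ ≤ ∑ t ∈ B.image f, (1 + if fiber t ∈ S then 1 else 0) := Finset.sum_le_sum hfiber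
    _ = #(B.image f) + #{t ∈ B.image f | fiber t ∈ S} := by
      rw [Finset.sum_add_distrib, Finset.card_filter, Finset.card_eq_sum_ones]
    _ ≤ (f '' ↑B).ncard + S.ncard := by
      rw [← Finset.coe_image, Set.ncard_coe_finset]
      gcongr
      rw [← Set.ncard_coe_finset]
      exact Set.ncard_le_ncard_of_injOn fiber (fun t ht => (Finset.mem_filter.1 ht).2)
        (hinj.mono (Finset.coe_subset.2 (Finset.filter_subset _ _))) hSfin

end Counting

theorem mod_two_counting_general {d : ℕ} (P : Set (Fin d → ℝ))
    (hFano : IsFanoPolytope P) (hcan : IsCanonicalPolytope P)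
    (B : Set (Fin d → ℝ)) (hB : B ⊆ {x ∈ frontier P | IsLatticePoint x})
    (hseg : ∀ x ∈ B, ∀ y ∈ B, x ≠ y → SameFacet P x y →
      {z ∈ segment ℝ x y | IsLatticePoint z} = {x, y}) :
    B.ncard ≤ 2 ^ (d + 1) - 2 ∧
    (B.ncard : ℤ) + 1 - 2 ^ d ≤
      ({q : Set (Fin d → ℝ) | ∃ x, x ∈ B ∧ -x ∈ B ∧ q = {x, -x}}.ncard : ℤ) := by
  obtain ⟨⟨V, -, hPV⟩, h0, -⟩ := hFano
  have hPc : IsCompact P := hPV ▸ V.finite_toSet.isCompact_convexHull (𝕜 := ℝ)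
  have hBP : B ⊆ P := fun x hx => hPc.isClosed.frontier_subset (hB hx).1
  have hBfin : B.Finite := hPc.isBounded.finite_isLatticePoint.subset
    fun x hx => ⟨hBP hx, (hB hx).2⟩
  have hpair : ∀ x ∈ B, ∀ y ∈ B, x ≠ y → mod2 x = mod2 y → y = -x := fun x hx y hy hxy h =>
    eq_neg_of_mod2_eq hPV h0 hcan (hBP hx) (hBP hy) (hB hx).2 (hB hy).2 hxy h
      (hseg x hx y hy hxy)
  have himage : (mod2 '' B).ncard < 2 ^ d := by
    have h0B : (0 : Fin d → ZMod 2) ∉ mod2 '' B := fun ⟨x, hx, hx0⟩ =>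
      mod2_ne_zero (hPV ▸ convex_convexHull ℝ _) h0 hcan (hB hx).1 (hB hx).2 hx0
    calc (mod2 '' B).ncard < (univ : Set (Fin d → ZMod 2)).ncard :=
          Set.ncard_lt_ncard (ssubset_univ_iff.2 fun h => h0B (h ▸ mem_univ _))
      _ = 2 ^ d := by simp [Set.ncard_univ]
  have h₁ := Set.ncard_le_two_mul_ncard_image hBfin hpair
  have h₂ := Set.ncard_le_ncard_image_add_ncard_pairs hBfin hpair
  have hcast : ((2 ^ d : ℕ) : ℤ) = 2 ^ d := by norm_cast
  exact ⟨by rw [pow_succ]; omega, by omega⟩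

/-- Counting modulo 2: if `B` is a set of boundary lattice points of a canonical
Fano polytope such that any two distinct points of `B` in a common facet span a lattice-point
free segment, then `|B| ≤ 2^{d+1} - 2` and the number `s` of centrally symmetric pairs in `B`
satisfies `s ≥ |B| + 1 - 2^d`. -/
theorem mod_two_counting {d : ℕ} (hd : 2 ≤ d) (P : Set (Fin d → ℝ))
    (hFano : IsFanoPolytope P) (hcan : IsCanonicalPolytope P)
    (B : Set (Fin d → ℝ)) (hB : B ⊆ {x ∈ frontier P | IsLatticePoint x})
    (hseg : ∀ x ∈ B, ∀ y ∈ B, x ≠ y → SameFacet P x y →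
      {z ∈ segment ℝ x y | IsLatticePoint z} = {x, y}) :
    B.ncard ≤ 2 ^ (d + 1) - 2 ∧
    (B.ncard : ℤ) + 1 - 2 ^ d ≤
      ({q : Set (Fin d → ℝ) | ∃ x, x ∈ B ∧ -x ∈ B ∧ q = {x, -x}}.ncard : ℤ) :=
  mod_two_counting_general P hFano hcan B hB hseg

end
end
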